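/- If (X, σ_X, φ) and (Y, σ_Y, ψ) are shift-flip systems and Φ is a conjugacy from (X, σ_X, φ) to (Y, σ_Y, ψ), then Φ(A(φ)) = A(ψ). -/

import Mathlib

open Set Function

/-- The map `x ↦ σᵐ(x)` on the full shift `A^ℤ`, where `σᵐ(x)_i = x_{i+m}`. -/
def shiftZ (A : Type*) (m : ℤ) : (ℤ → A) → ℤ → A := fun x i => x (i + m)

/-- The shift map `σ` on the full shift `A^ℤ`: `σ(x)_i = x_{i+1}`. -/
abbrev shiftMap (A : Type*) : (ℤ → A) → ℤ → A := shiftZ A 1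

/-- The inverse shift map `σ⁻¹`: `σ⁻¹(x)_i = x_{i-1}`. -/
abbrev shiftInv (A : Type*) : (ℤ → A) → ℤ → A := shiftZ A (-1)

/-- The reversal map `ρ`: `ρ(x)_i = x_{-i}`. -/
def revMap (A : Type*) : (ℤ → A) → ℤ → A := fun x i => x (-i)

/-- A shift space over `A`: a nonempty closed subset of `A^ℤ` with `σ(X) = X`. -/
def IsShiftSpace {A : Type*} [TopologicalSpace A] (X : Set (ℤ → A)) : Prop :=
  X.Nonempty ∧ IsClosed X ∧ shiftMap A '' X = X

/-- The word `w` occurs in `x` at position `i`, i.e. `x_{[i, i+|w|-1]} = w`. -/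
def OccursAt {A : Type*} (w : List A) (x : ℤ → A) (i : ℤ) : Prop :=
  ∀ k : Fin w.length, x (i + (k : ℕ)) = w.get k

/-- `w` is a block of `X`: it occurs in some point of `X`. -/
def IsBlockOf {A : Type*} (X : Set (ℤ → A)) (w : List A) : Prop :=
  ∃ x ∈ X, ∃ i : ℤ, OccursAt w x i

/-- `X` is irreducible: any two blocks can be joined by a block. -/
def ShiftIrreducible {A : Type*} (X : Set (ℤ → A)) : Prop :=
  ∀ u v : List A, IsBlockOf X u → IsBlockOf X v → ∃ w : List A, IsBlockOf X (u ++ w ++ v)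

/-- `w` is a finitary (intrinsically synchronizing) block of `X`. -/
def IsFinitary {A : Type*} (X : Set (ℤ → A)) (w : List A) : Prop :=
  IsBlockOf X w ∧ ∀ u v : List A, IsBlockOf X (u ++ w) → IsBlockOf X (w ++ v) →
    IsBlockOf X (u ++ w ++ v)

/-- A synchronized system: an irreducible shift space with a finitary block. -/
def IsSynchronized {A : Type*} [TopologicalSpace A] (X : Set (ℤ → A)) : Prop :=
  IsShiftSpace X ∧ ShiftIrreducible X ∧ ∃ w : List A, IsFinitary X w

/-- `φ` (as a map of the ambient full shift) restricts to a flip for `(X, σ_X)`: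
a homeomorphism `X → X` with `φ ∘ φ = id` and `φ ∘ σ_X = σ_X⁻¹ ∘ φ`.
(Being a homeomorphism is automatic from continuity and `φ ∘ φ = id` on `X`.) -/
def IsFlip {A : Type*} [TopologicalSpace A] (X : Set (ℤ → A))
    (φ : (ℤ → A) → ℤ → A) : Prop :=
  MapsTo φ X X ∧ ContinuousOn φ X ∧ (∀ x ∈ X, φ (φ x) = x) ∧
    ∀ x ∈ X, φ (shiftMap A x) = shiftInv A (φ x)

/-- The shift-flip systems `(X, σ_X, φ)` and `(Y, σ_Y, ψ)` are conjugate: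
there is a homeomorphism `Φ : X → Y` with `Φ ∘ σ_X = σ_Y ∘ Φ` and `Φ ∘ φ = ψ ∘ Φ`. -/
def SystemConj {A B : Type*} [TopologicalSpace A] [TopologicalSpace B]
    (X : Set (ℤ → A)) (φ : (ℤ → A) → ℤ → A)
    (Y : Set (ℤ → B)) (ψ : (ℤ → B) → ℤ → B) : Prop :=
  ∃ (Φ : (ℤ → A) → ℤ → B) (Ψ : (ℤ → B) → ℤ → A),
    MapsTo Φ X Y ∧ ContinuousOn Φ X ∧ MapsTo Ψ Y X ∧ ContinuousOn Ψ Y ∧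
    InvOn Ψ Φ X Y ∧
    (∀ x ∈ X, Φ (shiftMap A x) = shiftMap B (Φ x)) ∧ ∀ x ∈ X, Φ (φ x) = ψ (Φ x)

/-- Two flips `φ, φ'` for `(X, σ_X)` are conjugate. -/
def FlipConj {A : Type*} [TopologicalSpace A] (X : Set (ℤ → A))
    (φ φ' : (ℤ → A) → ℤ → A) : Prop :=
  SystemConj X φ X φ'

/-- `F(φ; n) = {x ∈ X : σ_X^n(x) = x and φ(x) = x}`. -/
def flipFix {A : Type*} (X : Set (ℤ → A)) (φ : (ℤ → A) → ℤ → A) (n : ℕ) :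
    Set (ℤ → A) :=
  {x ∈ X | (shiftMap A)^[n] x = x ∧ φ x = x}

/-- `A(φ)`: points of `X` in which some finitary block occurs infinitely often and
which differ from their `φ`-image in at least one but only finitely many coordinates. -/
def flipAsym {A : Type*} (X : Set (ℤ → A)) (φ : (ℤ → A) → ℤ → A) :
    Set (ℤ → A) :=
  {x ∈ X | (∃ w : List A, IsFinitary X w ∧ {i : ℤ | OccursAt w x i}.Infinite) ∧
    {i : ℤ | φ x i ≠ x i}.Nonempty ∧ {i : ℤ | φ x i ≠ x i}.Finite}

/-- `x` is a bi-infinite concatenation of words from `C`. -/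
def IsConcat {A : Type*} (C : Set (List A)) (x : ℤ → A) : Prop :=
  ∃ t : ℤ → ℤ, StrictMono t ∧ (∀ n : ℤ, ∃ j : ℤ, t j ≤ n ∧ n < t (j + 1)) ∧
    ∀ j : ℤ, ∃ w ∈ C, t (j + 1) = t j + w.length ∧ OccursAt w x (t j)

/-- A coded system: a shift space in which the set of bi-infinite concatenations of
words from some code `C` is dense. -/
def IsCoded {A : Type*} [TopologicalSpace A] (X : Set (ℤ → A)) : Prop :=
  IsShiftSpace X ∧ ∃ C : Set (List A), closure {x | IsConcat C x} = X

/-!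
A conjugacy and its inverse are sliding block codes (Curtis–Hedlund–Lyndon), say of radii `N`
and `M`. Since `ψ (Φ x) = Φ (φ x)` and `Φ` is injective, the set where `Φ x` and `ψ (Φ x)` differ
is nonempty and lies in the `N`-neighbourhood of the finite set where `x` and `φ x` differ.

For the finitary block we use that, in a shift space, `w` is finitary iff any two points with a
common occurrence of `w` can be spliced there without leaving the space. By pigeonhole, a finitary
`w` occurring infinitely often in `x` does so infinitely often with the same wide context, so the
`Φ`-image `v` of `w` padded by `R = M + N + 1` on both sides occurs infinitely often in `Φ x`. If
`y, z ∈ Y` share an occurrence of `v`, then `Ψ y` and `Ψ z` share an occurrence of `w`; splicing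
them there and applying `Φ` gives the splice of `y` and `z`, so `v` is finitary.
-/

open Filter SymbolicDynamics.FullShift

section Words
variable {A : Type*}

@[simp] lemma shiftZ_apply (m : ℤ) (x : ℤ → A) (i : ℤ) : shiftZ A m x i = x (i + m) := rfl

lemma shiftZ_shiftZ (m n : ℤ) (x : ℤ → A) : shiftZ A m (shiftZ A n x) = shiftZ A (m + n) x :=
  funext fun i => by simp [add_assoc, add_comm m]

@[simp] lemma shiftZ_zero (x : ℤ → A) : shiftZ A 0 x = x :=
  funext fun i => by simp

lemma shiftZ_mem {X : Set (ℤ → A)} (hX : shiftMap A '' X = X) (m : ℤ) {x : ℤ → A}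
    (hx : x ∈ X) : shiftZ A m x ∈ X := by
  induction m using Int.induction_on with
  | zero => simpa using hx
  | succ n ih =>
    rw [add_comm, ← shiftZ_shiftZ]
    exact hX ▸ mem_image_of_mem _ ih
  | pred n ih =>
    rw [← hX] at ih
    obtain ⟨y, hy, hyx⟩ := ih
    rwa [sub_eq_neg_add, ← shiftZ_shiftZ, ← hyx, shiftZ_shiftZ, neg_add_cancel, shiftZ_zero]

lemma forall_mem_Ico_add_iff {P : ℤ → Prop} {i : ℤ} {n : ℕ} :
    (∀ j ∈ Ico i (i + n), P j) ↔ ∀ k < n, P (i + k) := by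
  refine ⟨fun h k hk => h _ ⟨by omega, by omega⟩, fun h j hj => ?_⟩
  obtain ⟨k, rfl⟩ : ∃ k : ℕ, j = i + k := ⟨(j - i).toNat, by have := hj.1; omega⟩
  exact h k (by simpa using hj.2)

lemma occursAt_iff {w : List A} {x : ℤ → A} {i : ℤ} :
    OccursAt w x i ↔ ∀ k (hk : k < w.length), x (i + k) = w[k] :=
  ⟨fun h k hk => h ⟨k, hk⟩, fun h k => h k k.2⟩

lemma OccursAt.eqOn {w : List A} {x y : ℤ → A} {i : ℤ} (hx : OccursAt w x i)
    (hy : OccursAt w y i) : EqOn x y (Ico i (i + w.length)) :=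
  forall_mem_Ico_add_iff.2 fun k hk => (occursAt_iff.1 hx k hk).trans (occursAt_iff.1 hy k hk).symm

lemma OccursAt.congr {w : List A} {x y : ℤ → A} {i : ℤ} (hx : OccursAt w x i)
    (h : EqOn x y (Ico i (i + w.length))) : OccursAt w y i :=
  occursAt_iff.2 fun k hk => (forall_mem_Ico_add_iff.1 h k hk).symm.trans (occursAt_iff.1 hx k hk)

lemma occursAt_ofFn {n : ℕ} {x y : ℤ → A} {i : ℤ} :
    OccursAt (List.ofFn fun k : Fin n => y (i + k)) x i ↔ EqOn x y (Ico i (i + n)) := by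
  simp only [occursAt_iff, List.length_ofFn, List.getElem_ofFn]
  exact (forall_mem_Ico_add_iff (P := fun j => x j = y j)).symm

lemma occursAt_append {u v : List A} {x : ℤ → A} {i : ℤ} :
    OccursAt (u ++ v) x i ↔ OccursAt u x i ∧ OccursAt v x (i + u.length) := by
  simp only [occursAt_iff, List.length_append]
  constructor
  · intro h
    refine ⟨fun k hk => ?_, fun k hk => ?_⟩
    · simpa [List.getElem_append_left hk] using h k (by omega)
    · simpa [add_assoc] using h (u.length + k) (by omega)
  · rintro ⟨hu, hv⟩ k hk
    by_cases hku : k < u.length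
    · simpa [List.getElem_append_left hku] using hu k hku
    · rw [List.getElem_append_right (not_lt.1 hku)]
      convert hv (k - u.length) (by omega) using 2
      omega

lemma occursAt_shiftZ {w : List A} {x : ℤ → A} {m i : ℤ} :
    OccursAt w (shiftZ A m x) i ↔ OccursAt w x (i + m) := by
  simp only [occursAt_iff, shiftZ_apply, add_right_comm]

lemma IsBlockOf.exists_occursAt {X : Set (ℤ → A)} {w : List A} (hX : shiftMap A '' X = X)
    (hw : IsBlockOf X w) (i : ℤ) : ∃ x ∈ X, OccursAt w x i := by
  obtain ⟨x, hx, p, hp⟩ := hw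
  exact ⟨shiftZ A (p - i) x, shiftZ_mem hX _ hx, occursAt_shiftZ.2 (by rwa [add_sub_cancel])⟩

end Words

lemma piecewise_Iio_of_lt {α β : Type*} [LinearOrder α] {f g : α → β} {i j : α} (h : j < i) :
    (Iio i).piecewise f g j = f j :=
  piecewise_eq_of_mem _ _ _ h

lemma piecewise_Iio_of_le {α β : Type*} [LinearOrder α] {f g : α → β} {i j : α} (h : i ≤ j) :
    (Iio i).piecewise f g j = g j :=
  piecewise_eq_of_notMem _ _ _ (not_lt.2 h)

section Finitary
variable {A : Type*} {X : Set (ℤ → A)} {w : List A}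

lemma IsFinitary.piecewise_mem [TopologicalSpace A] (hX : IsShiftSpace X) (hw : IsFinitary X w)
    {y z : ℤ → A} (hy : y ∈ X) (hz : z ∈ X) {i : ℤ} (hyw : OccursAt w y i)
    (hzw : OccursAt w z i) : (Iio i).piecewise y z ∈ X := by
  have approx : ∀ n : ℕ, ∃ x ∈ X,
      EqOn x ((Iio i).piecewise y z) (Ico (i - n) (i + w.length + n)) := by
    intro n
    set u := List.ofFn fun k : Fin n => y (i - n + k)
    set v := List.ofFn fun k : Fin n => z (i + w.length + k)
    have hu : OccursAt u y (i - n) := occursAt_ofFn.2 (eqOn_refl _ _)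
    have hv : OccursAt v z (i + w.length) := occursAt_ofFn.2 (eqOn_refl _ _)
    have hulen : i - n + u.length = i := by simp [u]
    have huw : IsBlockOf X (u ++ w) := ⟨y, hy, i - n, occursAt_append.2 ⟨hu, by rwa [hulen]⟩⟩
    have hwv : IsBlockOf X (w ++ v) := ⟨z, hz, i, occursAt_append.2 ⟨hzw, hv⟩⟩
    obtain ⟨x, hx, hocc⟩ := (hw.2 u v huw hwv).exists_occursAt hX.2.2 (i - n)
    obtain ⟨⟨hxu, hxw⟩, hxv⟩ := by
      simpa only [occursAt_append, List.length_append, Nat.cast_add, ← add_assoc, hulen] using hocc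
    refine ⟨x, hx, fun j hj => ?_⟩
    rcases lt_or_ge j i with hji | hij
    · rw [piecewise_Iio_of_lt hji]
      exact hxu.eqOn hu ⟨hj.1, by simpa [u] using hji⟩
    · rw [piecewise_Iio_of_le hij]
      rcases lt_or_ge j (i + w.length) with hjw | hjw
      · exact hxw.eqOn hzw ⟨hij, hjw⟩
      · exact hxv.eqOn hv ⟨hjw, by simpa [v] using hj.2⟩
  choose x hxX hx using approx
  refine hX.2.1.mem_of_tendsto (tendsto_pi_nhds.2 fun j => tendsto_nhds_of_eventually_eq ?_)
    (Eventually.of_forall (f := atTop) hxX)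
  filter_upwards [eventually_gt_atTop (j - i).natAbs] with n hn
  exact hx n ⟨by omega, by omega⟩

lemma IsFinitary.of_piecewise_mem (hX : shiftMap A '' X = X) (hw : IsBlockOf X w)
    (h : ∀ y ∈ X, ∀ z ∈ X, ∀ i, OccursAt w y i → OccursAt w z i → (Iio i).piecewise y z ∈ X) :
    IsFinitary X w := by
  refine ⟨hw, fun u v huw hwv => ?_⟩
  obtain ⟨y, hy, hyuw⟩ := huw.exists_occursAt hX 0
  obtain ⟨z, hz, hzwv⟩ := hwv.exists_occursAt hX u.length
  rw [occursAt_append, zero_add] at hyuw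
  rw [occursAt_append] at hzwv
  refine ⟨_, h y hy z hz _ hyuw.2 hzwv.1, 0, ?_⟩
  simp only [occursAt_append, List.length_append, Nat.cast_add, zero_add]
  refine ⟨⟨hyuw.1.congr fun j hj => ?_, hzwv.1.congr fun j hj => ?_⟩, hzwv.2.congr fun j hj => ?_⟩
  · exact (piecewise_Iio_of_lt (by simpa using hj.2)).symm
  · exact (piecewise_Iio_of_le hj.1).symm
  · exact (piecewise_Iio_of_le (by have := hj.1; omega)).symm

end Finitary

lemma IsCompact.exists_finset_eqOn_imp_eq {ι A C : Type*} [TopologicalSpace A]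
    [DiscreteTopology A] [TopologicalSpace C] [DiscreteTopology C] {X : Set (ι → A)}
    (hX : IsCompact X) {F : (ι → A) → C} (hF : ContinuousOn F X) :
    ∃ S : Finset ι, ∀ x ∈ X, ∀ x' ∈ X, EqOn x x' S → F x = F x' := by
  classical
  have hloc : ∀ x ∈ X, ∃ I : Finset ι, ∀ y ∈ X, y ∈ cylinder I x → F y = F x := by
    intro x hx
    obtain ⟨U, hU, hUF⟩ := mem_nhdsWithin_iff_exists_mem_nhds_inter.1
      (hF x hx ((isOpen_discrete {F x}).mem_nhds rfl))
    rw [nhds_pi, Filter.mem_pi'] at hU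
    obtain ⟨I, t, ht, hIt⟩ := hU
    exact ⟨I, fun y hy hyx => hUF ⟨hIt fun i hi => hyx i hi ▸ mem_of_mem_nhds (ht i), hy⟩⟩
  choose! I hI using hloc
  obtain ⟨t, htX, hXt⟩ := hX.elim_nhds_subcover (fun x => cylinder (I x) x)
    fun x _ => (isOpen_cylinder _ _).mem_nhds fun _ _ => rfl
  refine ⟨t.biUnion I, fun x hx x' hx' hxx' => ?_⟩
  obtain ⟨m, hmt, hxm⟩ := mem_iUnion₂.1 (hXt hx)
  have hx'm : x' ∈ cylinder (I m) m := fun i hi =>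
    (hxx' (Finset.mem_biUnion.2 ⟨m, hmt, hi⟩)).symm.trans (hxm i hi)
  rw [hI m (htX m hmt) x hx hxm, hI m (htX m hmt) x' hx' hx'm]

section SlidingBlockCodes
variable {A B : Type*} {X : Set (ℤ → A)} {Φ : (ℤ → A) → ℤ → B}

def LocallyDetermined (X : Set (ℤ → A)) (N : ℕ) (Φ : (ℤ → A) → ℤ → B) : Prop :=
  ∀ x ∈ X, ∀ x' ∈ X, ∀ j : ℤ, EqOn x x' (Icc (j - N) (j + N)) → Φ x j = Φ x' j

lemma LocallyDetermined.eqOn {N : ℕ} (hΦ : LocallyDetermined X N Φ) {x x' : ℤ → A}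
    (hx : x ∈ X) (hx' : x' ∈ X) {a b : ℤ} (h : EqOn x x' (Ico a b)) :
    EqOn (Φ x) (Φ x') (Ico (a + N) (b - N)) := fun j hj =>
  hΦ x hx x' hx' j fun k hk => h ⟨by have := hj.1; have := hk.1; omega,
    by have := hj.2; have := hk.2; omega⟩

lemma LocallyDetermined.finite_setOf_ne {N : ℕ} (hΦ : LocallyDetermined X N Φ) {x x' : ℤ → A}
    (hx : x ∈ X) (hx' : x' ∈ X) (h : {i | x i ≠ x' i}.Finite) :
    {j | Φ x j ≠ Φ x' j}.Finite := by
  refine (h.biUnion fun i _ => finite_Icc (i - N) (i + N)).subset fun j hj => ?_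
  by_contra hfar
  simp only [mem_iUnion, mem_Icc, exists_prop, not_exists, not_and] at hfar
  refine hj (hΦ x hx x' hx' j fun k hk => ?_)
  by_contra hne
  exact hfar k hne (by have := hk.2; omega) (by have := hk.1; omega)

lemma map_shiftZ_of_map_shiftMap (hX : shiftMap A '' X = X)
    (hΦ : ∀ x ∈ X, Φ (shiftMap A x) = shiftMap B (Φ x)) (m : ℤ) {x : ℤ → A} (hx : x ∈ X) :
    Φ (shiftZ A m x) = shiftZ B m (Φ x) := by
  induction m using Int.induction_on with
  | zero => simp
  | succ n ih =>
    rw [add_comm, ← shiftZ_shiftZ, ← shiftZ_shiftZ, ← ih]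
    exact hΦ _ (shiftZ_mem hX n hx)
  | pred n ih =>
    have h := hΦ _ (shiftZ_mem hX (-n - 1) hx)
    unfold shiftMap at h
    rw [shiftZ_shiftZ, add_sub_cancel, ih] at h
    calc Φ (shiftZ A (-n - 1) x) = shiftZ B (-1) (shiftZ B 1 (Φ (shiftZ A (-n - 1) x))) := by
          simp [shiftZ_shiftZ]
      _ = shiftZ B (-n - 1) (Φ x) := by rw [← h, shiftZ_shiftZ]; congr 1; ring

lemma IsShiftSpace.exists_locallyDetermined [TopologicalSpace A] [Finite A] [DiscreteTopology A]
    [TopologicalSpace B] [DiscreteTopology B] (hX : IsShiftSpace X) (hΦc : ContinuousOn Φ X)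
    (hΦ : ∀ x ∈ X, Φ (shiftMap A x) = shiftMap B (Φ x)) : ∃ N, LocallyDetermined X N Φ := by
  obtain ⟨S, hS⟩ :=
    hX.2.1.isCompact.exists_finset_eqOn_imp_eq ((continuous_apply 0).comp_continuousOn hΦc)
  refine ⟨S.sup Int.natAbs, fun x hx x' hx' j h => ?_⟩
  have key := hS _ (shiftZ_mem hX.2.2 j hx) _ (shiftZ_mem hX.2.2 j hx') fun k hk => by
    have := Finset.le_sup (f := Int.natAbs) hk
    exact h ⟨by omega, by omega⟩
  simpa [map_shiftZ_of_map_shiftMap hX.2.2 hΦ, hx, hx'] using key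

end SlidingBlockCodes

lemma Set.InvOn.semiconj_of_semiconj {α β : Type*} {f : α → β} {g : β → α} {s : Set α}
    {t : Set β} (hinv : InvOn g f s t) (hg : MapsTo g t s) {fa : α → α} {fb : β → β}
    (hfa : MapsTo fa s s) (h : ∀ x ∈ s, f (fa x) = fb (f x)) : ∀ y ∈ t, g (fb y) = fa (g y) :=
  fun y hy => calc
    g (fb y) = g (fb (f (g y))) := by rw [hinv.2 hy]
    _ = g (f (fa (g y))) := by rw [h _ (hg hy)]
    _ = fa (g y) := hinv.1 (hfa (hg hy))

lemma Set.Infinite.exists_infinite_eqOn_shiftZ {A : Type*} [Finite A] {I : Set ℤ}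
    (hI : I.Infinite) (x : ℤ → A) (L : ℕ) :
    ∃ i₁ ∈ I, {i | EqOn (shiftZ A (i - i₁) x) x (Ico (i₁ - L) (i₁ + L))}.Infinite := by
  let window : ℤ → Ico (-(L : ℤ)) L → A := fun i k => x (i + k)
  obtain ⟨b, hb⟩ : ∃ b, (I ∩ window ⁻¹' {b}).Infinite := by
    by_contra! h
    exact hI ((finite_iUnion h).subset fun i hi => mem_iUnion.2 ⟨window i, hi, rfl⟩)
  obtain ⟨i₁, hi₁⟩ := hb.nonempty
  refine ⟨i₁, hi₁.1, hb.mono fun i hi j hj => ?_⟩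
  have := congrFun (hi.2.trans hi₁.2.symm) ⟨j - i₁, by have := hj.1; have := hj.2; omega,
    by have := hj.2; omega⟩
  simpa [window, add_comm, add_sub_assoc', sub_add_cancel] using this

section Conjugacy
variable {A B : Type*} {X : Set (ℤ → A)} {Y : Set (ℤ → B)}
  {Φ : (ℤ → A) → ℤ → B} {Ψ : (ℤ → B) → ℤ → A} {M N : ℕ}

lemma eqOn_shiftZ_of_occursAt_image (hX : shiftMap A '' X = X) (hΦY : MapsTo Φ X Y)
    (hinv : InvOn Ψ Φ X Y) (hΦσ : ∀ m : ℤ, ∀ x ∈ X, Φ (shiftZ A m x) = shiftZ B m (Φ x))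
    (hΨ : LocallyDetermined Y M Ψ) {x : ℤ → A} (hx : x ∈ X) {y : ℤ → B} (hy : y ∈ Y)
    {v : List B} {p q : ℤ} (hp : OccursAt v (Φ x) p) (hq : OccursAt v y q) :
    EqOn (Ψ y) (shiftZ A (p - q) x) (Ico (q + M) (q + v.length - M)) := by
  have hx' := shiftZ_mem hX (p - q) hx
  have hq' : OccursAt v (Φ (shiftZ A (p - q) x)) q := by
    rw [hΦσ _ _ hx, occursAt_shiftZ]
    simpa using hp
  rw [← hinv.1 hx']
  exact hΨ.eqOn hy (hΦY hx') (hq.eqOn hq')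

lemma isFinitary_ofFn_image [TopologicalSpace A] (hX : IsShiftSpace X)
    (hY : shiftMap B '' Y = Y) (hΦY : MapsTo Φ X Y) (hΨX : MapsTo Ψ Y X) (hinv : InvOn Ψ Φ X Y)
    (hΦσ : ∀ m : ℤ, ∀ x ∈ X, Φ (shiftZ A m x) = shiftZ B m (Φ x))
    (hΦ : LocallyDetermined X N Φ) (hΨ : LocallyDetermined Y M Ψ) {x : ℤ → A} (hx : x ∈ X)
    {w : List A} (hw : IsFinitary X w) {i : ℤ} (hwi : OccursAt w x i) {R : ℕ} (hR : M + N < R) :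
    IsFinitary Y (List.ofFn fun k : Fin (w.length + 2 * R) => Φ x (i - R + k)) := by
  set v := List.ofFn fun k : Fin (w.length + 2 * R) => Φ x (i - R + k)
  have hv : OccursAt v (Φ x) (i - R) := occursAt_ofFn.2 (eqOn_refl _ _)
  have hvlen : (v.length : ℤ) = w.length + 2 * R := by simp [v]
  have recover : ∀ y ∈ Y, ∀ q, OccursAt v y q →
      EqOn (Ψ y) (shiftZ A (i - R - q) x) (Ico (q + M) (q + v.length - M)) :=
    fun y hy q hq => eqOn_shiftZ_of_occursAt_image hX.2.2 hΦY hinv hΦσ hΨ hx hy hv hq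
  refine IsFinitary.of_piecewise_mem hY ⟨Φ x, hΦY hx, _, hv⟩ fun y hy z hz q hyq hzq => ?_
  have hwc : OccursAt w (shiftZ A (i - R - q) x) (q + R) :=
    occursAt_shiftZ.2 (by convert hwi using 1; ring)
  have hsub : Ico (q + R) (q + R + w.length) ⊆ Ico (q + M) (q + v.length - M) :=
    fun k hk => ⟨by have := hk.1; omega, by have := hk.2; omega⟩
  set s := (Iio (q + R)).piecewise (Ψ y) (Ψ z)
  have hs : s ∈ X := hw.piecewise_mem hX (hΨX hy) (hΨX hz)
    (hwc.congr ((recover y hy q hyq).symm.mono hsub))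
    (hwc.congr ((recover z hz q hzq).symm.mono hsub))
  have hsy : ∀ k < q + v.length - M, s k = Ψ y k := fun k hk => by
    rcases lt_or_ge k (q + R) with hkR | hkR
    · exact piecewise_Iio_of_lt hkR
    · exact (piecewise_Iio_of_le hkR).trans
        ((recover z hz q hzq ⟨by omega, hk⟩).trans (recover y hy q hyq ⟨by omega, hk⟩).symm)
  have hsz : ∀ k, q + M ≤ k → s k = Ψ z k := fun k hk => by
    rcases lt_or_ge k (q + R) with hkR | hkR
    · exact (piecewise_Iio_of_lt hkR).trans
        ((recover y hy q hyq ⟨hk, by omega⟩).trans (recover z hz q hzq ⟨hk, by omega⟩).symm)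
    · exact piecewise_Iio_of_le hkR
  -- Since `R > M + N`, each coordinate of `Φ s` reads only `Ψ y` or only `Ψ z`.
  suffices Φ s = (Iio q).piecewise y z from this ▸ hΦY hs
  funext j
  rcases lt_or_ge j (q + M + N) with hj | hj
  · rw [hΦ s hs (Ψ y) (hΨX hy) j fun k hk => hsy k (by have := hk.2; omega), hinv.2 hy]
    rcases lt_or_ge j q with hjq | hjq
    · exact (piecewise_Iio_of_lt hjq).symm
    · rw [piecewise_Iio_of_le hjq]
      exact hyq.eqOn hzq ⟨hjq, by omega⟩
  · rw [hΦ s hs (Ψ z) (hΨX hz) j fun k hk => hsz k (by have := hk.1; omega), hinv.2 hz]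
    exact (piecewise_Iio_of_le (by omega)).symm

lemma exists_isFinitary_infinite_occursAt_image [TopologicalSpace A] [Finite A]
    (hX : IsShiftSpace X) (hY : shiftMap B '' Y = Y) (hΦY : MapsTo Φ X Y) (hΨX : MapsTo Ψ Y X)
    (hinv : InvOn Ψ Φ X Y)
    (hΦσ : ∀ m : ℤ, ∀ x ∈ X, Φ (shiftZ A m x) = shiftZ B m (Φ x))
    (hΦ : LocallyDetermined X N Φ) (hΨ : LocallyDetermined Y M Ψ) {x : ℤ → A} (hx : x ∈ X)
    {w : List A} (hw : IsFinitary X w) (hocc : {i | OccursAt w x i}.Infinite) :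
    ∃ v : List B, IsFinitary Y v ∧ {j | OccursAt v (Φ x) j}.Infinite := by
  set R := M + N + 1
  obtain ⟨i₁, hi₁, hJ⟩ := hocc.exists_infinite_eqOn_shiftZ x (w.length + R + N)
  refine ⟨_, isFinitary_ofFn_image hX hY hΦY hΨX hinv hΦσ hΦ hΨ hx hw hi₁ (Nat.lt_succ_self _),
    (hJ.image (sub_left_injective (b := (R : ℤ))).injOn).mono ?_⟩
  rintro _ ⟨i, hi, rfl⟩
  have hagree := hΦ.eqOn (shiftZ_mem hX.2.2 (i - i₁) hx) hx hi
  show OccursAt _ (Φ x) (i - R)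
  rw [show i - R = i₁ - R + (i - i₁) by ring, ← occursAt_shiftZ, ← hΦσ _ _ hx]
  exact (occursAt_ofFn.2 (eqOn_refl _ _)).congr (hagree.symm.mono fun k hk => by
    simp only [List.length_ofFn, mem_Ico] at hk ⊢; omega)

end Conjugacy

lemma mapsTo_flipAsym {A B : Type*} [TopologicalSpace A] [Finite A] [DiscreteTopology A]
    [TopologicalSpace B] [Finite B] [DiscreteTopology B] {X : Set (ℤ → A)} {Y : Set (ℤ → B)}
    {φ : (ℤ → A) → ℤ → A} {ψ : (ℤ → B) → ℤ → B} {Φ : (ℤ → A) → ℤ → B} {Ψ : (ℤ → B) → ℤ → A}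
    (hX : IsShiftSpace X) (hY : IsShiftSpace Y) (hφ : MapsTo φ X X)
    (hΦY : MapsTo Φ X Y) (hΦc : ContinuousOn Φ X) (hΨX : MapsTo Ψ Y X) (hΨc : ContinuousOn Ψ Y)
    (hinv : InvOn Ψ Φ X Y) (hΦσ : ∀ x ∈ X, Φ (shiftMap A x) = shiftMap B (Φ x))
    (hΨσ : ∀ y ∈ Y, Ψ (shiftMap B y) = shiftMap A (Ψ y))
    (hflip : ∀ x ∈ X, Φ (φ x) = ψ (Φ x)) :
    MapsTo Φ (flipAsym X φ) (flipAsym Y ψ) := by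
  obtain ⟨N, hΦ⟩ := hX.exists_locallyDetermined hΦc hΦσ
  obtain ⟨M, hΨ⟩ := hY.exists_locallyDetermined hΨc hΨσ
  rintro x ⟨hx, ⟨w, hw, hocc⟩, hne, hfin⟩
  have hdiff : {j | ψ (Φ x) j ≠ Φ x j} = {j | Φ (φ x) j ≠ Φ x j} := by rw [hflip x hx]
  refine ⟨hΦY hx, exists_isFinitary_infinite_occursAt_image hX hY.2.2 hΦY hΨX hinv
    (fun m _ hx => map_shiftZ_of_map_shiftMap hX.2.2 hΦσ m hx) hΦ hΨ hx hw hocc, ?_, ?_⟩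
  · rw [hdiff]
    exact Function.ne_iff.1 (hinv.1.injOn.ne (hφ hx) hx (Function.ne_iff.2 hne))
  · rw [hdiff]
    exact hΦ.finite_setOf_ne (hφ hx) hx hfin

/-- If `Φ` is a conjugacy from the shift-flip system `(X, σ_X, φ)` to `(Y, σ_Y, ψ)`,
then `Φ(A(φ)) = A(ψ)`. -/
theorem conjugacy_image_flipAsym
    {A B : Type*} [Fintype A] [TopologicalSpace A] [DiscreteTopology A]
    [Fintype B] [TopologicalSpace B] [DiscreteTopology B]
    (X : Set (ℤ → A)) (hX : IsShiftSpace X) (Y : Set (ℤ → B)) (hY : IsShiftSpace Y)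
    (φ : (ℤ → A) → ℤ → A) (hφ : IsFlip X φ)
    (ψ : (ℤ → B) → ℤ → B) (hψ : IsFlip Y ψ)
    (Φ : (ℤ → A) → ℤ → B) (Ψ : (ℤ → B) → ℤ → A)
    (hΦmaps : Set.MapsTo Φ X Y) (hΦcont : ContinuousOn Φ X)
    (hΨmaps : Set.MapsTo Ψ Y X) (hΨcont : ContinuousOn Ψ Y)
    (hinv : Set.InvOn Ψ Φ X Y)
    (hshift : ∀ x ∈ X, Φ (shiftMap A x) = shiftMap B (Φ x))
    (hflip : ∀ x ∈ X, Φ (φ x) = ψ (Φ x)) :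
    Φ '' flipAsym X φ = flipAsym Y ψ := by
  have hΨshift := hinv.semiconj_of_semiconj hΨmaps (fun x hx => shiftZ_mem hX.2.2 1 hx) hshift
  have hΨflip := hinv.semiconj_of_semiconj hΨmaps hφ.1 hflip
  refine (mapsTo_flipAsym hX hY hφ.1 hΦmaps hΦcont hΨmaps hΨcont hinv hshift hΨshift
    hflip).image_subset.antisymm fun y hy => ⟨Ψ y, ?_, hinv.2 hy.1⟩
  exact mapsTo_flipAsym hY hX hψ.1 hΨmaps hΨcont hΦmaps hΦcont hinv.symm hΨshift hshift
    hΨflip hy
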